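/- arXiv:2206.01945 — 2 statements merged into one kernel-verified Lean document; each statement's English description precedes it below -/
import Mathlib

section
/- Consider the scalar nonlinear recursion x_{k+1} = (1/2)·x_k³/(1 + x_k²) + u_k with x_0 = 0. If u ∈ ℓ²(ℕ, ℝ), then x ∈ ℓ²(ℕ, ℝ) and ‖x‖_{ℓ²} ≤ 2‖u‖_{ℓ²}. -/
/-!
Since `|x³/(1+x²)| ≤ |x|` and `(p + q)² ≤ 2p² + 2q²`, the recursion gives
`x_{k+1}² ≤ x_k²/2 + 2 u_k²`. Summing this over `k < N`, with `x_0 = 0`, bounds the partial sums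
of `x²` by `4 ∑ u²` uniformly in `N`.
-/

open Finset

theorem sub_mul_sum_range_succ_le_of_succ_le {s v : ℕ → ℝ} {a : ℝ} (ha : 0 ≤ a)
    (hs : ∀ k, 0 ≤ s k) (hrec : ∀ k, s (k + 1) ≤ a * s k + v k) (N : ℕ) :
    (1 - a) * ∑ k ∈ range (N + 1), s k ≤ s 0 + ∑ k ∈ range N, v k := by
  have hshift : ∑ k ∈ range N, s (k + 1) ≤ a * ∑ k ∈ range N, s k + ∑ k ∈ range N, v k := by
    rw [mul_sum, ← sum_add_distrib]
    exact sum_le_sum fun k _ => hrec k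
  have htail : 0 ≤ a * s N := mul_nonneg ha (hs N)
  have hfirst := sum_range_succ' s N
  have hlast := sum_range_succ s N
  nlinarith

theorem summable_and_tsum_le_of_succ_le {s v : ℕ → ℝ} {a : ℝ} (ha : 0 ≤ a) (ha1 : a < 1)
    (hs : ∀ k, 0 ≤ s k) (hv : ∀ k, 0 ≤ v k) (hv_sum : Summable v)
    (hrec : ∀ k, s (k + 1) ≤ a * s k + v k) :
    Summable s ∧ ∑' k, s k ≤ (s 0 + ∑' k, v k) / (1 - a) := by
  have hbound : ∀ N, ∑ k ∈ range N, s k ≤ (s 0 + ∑' k, v k) / (1 - a) := by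
    intro N
    rw [le_div_iff₀ (sub_pos.mpr ha1), mul_comm]
    calc (1 - a) * ∑ k ∈ range N, s k ≤ (1 - a) * ∑ k ∈ range (N + 1), s k :=
          mul_le_mul_of_nonneg_left (sum_le_sum_of_subset_of_nonneg
            (range_subset_range.mpr N.le_succ) fun k _ _ => hs k) (by linarith)
      _ ≤ s 0 + ∑ k ∈ range N, v k := sub_mul_sum_range_succ_le_of_succ_le ha hs hrec N
      _ ≤ s 0 + ∑' k, v k := by gcongr; exact hv_sum.sum_le_tsum _ fun k _ => hv k
  have hsum : Summable s := summable_of_sum_range_le hs hbound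
  exact ⟨hsum, hsum.tsum_le_of_sum_range_le hbound⟩

theorem sq_half_cube_div_one_add_sq_add_le (t w : ℝ) :
    ((1 / 2) * t ^ 3 / (1 + t ^ 2) + w) ^ 2 ≤ 1 / 2 * t ^ 2 + 2 * w ^ 2 := by
  have hf : ((1 / 2) * t ^ 3 / (1 + t ^ 2)) ^ 2 ≤ t ^ 2 / 4 := by
    rw [div_pow, div_le_iff₀ (by positivity)]
    nlinarith [sq_nonneg t, pow_nonneg (sq_nonneg t) 2]
  nlinarith [sq_nonneg ((1 / 2) * t ^ 3 / (1 + t ^ 2) - w)]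

/-- For the scalar nonlinear recursion `x_{k+1} = (1/2) x_k³/(1+x_k²) + u_k`,
`x 0 = 0`, if `u ∈ ℓ²` then `x ∈ ℓ²` with `‖x‖ ≤ 2‖u‖`. -/
theorem nonlinear_recursion_l2_gain_two
    (x u : ℕ → ℝ) (hx0 : x 0 = 0)
    (hrec : ∀ k : ℕ, x (k + 1) = (1 / 2) * (x k) ^ 3 / (1 + (x k) ^ 2) + u k)
    (hu : Summable (fun k => (u k) ^ 2)) :
    Summable (fun k => (x k) ^ 2) ∧
      Real.sqrt (∑' k, (x k) ^ 2) ≤ 2 * Real.sqrt (∑' k, (u k) ^ 2) := by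
  have hstep : ∀ k, x (k + 1) ^ 2 ≤ 1 / 2 * x k ^ 2 + 2 * u k ^ 2 := fun k => by
    rw [hrec k]; exact sq_half_cube_div_one_add_sq_add_le (x k) (u k)
  obtain ⟨hsum, htsum⟩ := summable_and_tsum_le_of_succ_le (by norm_num) (by norm_num)
    (fun k => sq_nonneg (x k)) (fun k => by positivity) (hu.mul_left 2) hstep
  refine ⟨hsum, Real.sqrt_le_iff.mpr ⟨by positivity, ?_⟩⟩
  rw [tsum_mul_left, hx0] at htsum
  rw [mul_pow, Real.sq_sqrt (tsum_nonneg fun k => sq_nonneg (u k))]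
  norm_num at htsum
  linarith
end

section
/- Consider the scalar nonlinear recursion x̃_{k+1} = (ρ^{-1}/2)·x̃_k³/(ρ^{-2k} + x̃_k²) + ρ^{-1} ũ_k with x̃_0 = 0 and ρ ∈ (√2/2, 1]. If ũ ∈ ℓ²(ℕ, ℝ), then x̃ ∈ ℓ²(ℕ, ℝ) and ‖x̃‖_{ℓ²} ≤ (2/√(2ρ² − 1))·‖ũ‖_{ℓ²}. -/
set_option maxHeartbeats 1000000

/-- For the ρ-weighted scalar nonlinear recursion
`x̃_{k+1} = (ρ⁻¹/2) x̃_k³/(ρ^{-2k} + x̃_k²) + ρ⁻¹ ũ_k`, `x̃ 0 = 0`, with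
`ρ ∈ (√2/2, 1]`: if `ũ ∈ ℓ²` then `x̃ ∈ ℓ²` with `‖x̃‖ ≤ (2/√(2ρ²−1))‖ũ‖`. -/
theorem weighted_nonlinear_recursion_l2_gain
    (ρ : ℝ) (hρl : Real.sqrt 2 / 2 < ρ) (hρu : ρ ≤ 1)
    (x u : ℕ → ℝ) (hx0 : x 0 = 0)
    (hrec : ∀ k : ℕ,
      x (k + 1) = (ρ⁻¹ / 2) * (x k) ^ 3 / ((ρ ^ (2 * k))⁻¹ + (x k) ^ 2) + ρ⁻¹ * u k)
    (hu : Summable (fun k => (u k) ^ 2)) :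
    Summable (fun k => (x k) ^ 2) ∧
      Real.sqrt (∑' k, (x k) ^ 2) ≤
        (2 / Real.sqrt (2 * ρ ^ 2 - 1)) * Real.sqrt (∑' k, (u k) ^ 2) := by
  have hρ0 : 0 < ρ := lt_trans (by positivity) hρl
  have hsq2 : Real.sqrt 2 ^ 2 = 2 := Real.sq_sqrt (by norm_num)
  have h2 : (1:ℝ) < 2 * ρ ^ 2 := by
    nlinarith [Real.sqrt_nonneg 2, hρl]
  set s := Real.sqrt (2 * ρ ^ 2 - 1) with hsdef
  have hs2 : s ^ 2 = 2 * ρ ^ 2 - 1 := Real.sq_sqrt (by linarith)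
  have hs0 : 0 < s := Real.sqrt_pos.mpr (by linarith)
  have hs1 : s ≤ 1 := Real.sqrt_le_one.mpr (by nlinarith)
  clear_value s
  clear hsdef
  set A : ℝ := (1 + s) / (4 * ρ ^ 2) with hAdef
  set B : ℝ := (1 + 1 / s) / ρ ^ 2 with hBdef
  have hρ2 : (0:ℝ) < ρ ^ 2 := by positivity
  have hA0 : 0 ≤ A := by positivity
  have hB0 : 0 ≤ B := by positivity
  have hA1 : A < 1 := by
    rw [hAdef, div_lt_one (by positivity)]
    nlinarith [sq_nonneg (2 * s - 1)]
  -- pointwise step inequality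
  have hstep : ∀ k, (x (k + 1)) ^ 2 ≤ A * (x k) ^ 2 + B * (u k) ^ 2 := by
    intro k
    have hc : 0 < (ρ ^ (2 * k))⁻¹ := by positivity
    set c := (ρ ^ (2 * k))⁻¹ with hcdef
    set X := x k with hX
    set U := u k with hU
    have hcx : 0 < c + X ^ 2 := by positivity
    set y := X ^ 3 / (c + X ^ 2) with hydef
    have hy : y ^ 2 ≤ X ^ 2 := by
      rw [hydef, div_pow, div_le_iff₀ (by positivity)]
      nlinarith [mul_nonneg hc.le (sq_nonneg X), mul_nonneg (mul_nonneg hc.le hc.le) (sq_nonneg X),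
        mul_nonneg hc.le (mul_nonneg (sq_nonneg X) (sq_nonneg X))]
    have hgoal : (ρ⁻¹ / 2) * X ^ 3 / (c + X ^ 2) = (ρ⁻¹ / 2) * y := by
      rw [hydef]; ring
    rw [hrec k, ← hcdef, ← hX, ← hU, hgoal]
    have key : s * (y + 2 * U) ^ 2 ≤ s * (1 + s) * X ^ 2 + 4 * (s + 1) * U ^ 2 := by
      nlinarith [sq_nonneg (s * y - 2 * U),
        mul_le_mul_of_nonneg_left hy (by positivity : (0:ℝ) ≤ s * (1 + s))]
    have expand : ((ρ⁻¹ / 2) * y + ρ⁻¹ * U) ^ 2 = (y + 2 * U) ^ 2 / (4 * ρ ^ 2) := by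
      field_simp
      ring
    have rhs_eq : A * X ^ 2 + B * U ^ 2
        = (s * (1 + s) * X ^ 2 + 4 * (s + 1) * U ^ 2) / (s * (4 * ρ ^ 2)) := by
      rw [hAdef, hBdef]
      field_simp
    rw [expand, rhs_eq, div_le_div_iff₀ (by positivity) (by positivity)]
    have hmul := mul_le_mul_of_nonneg_right key (le_of_lt (by positivity : (0:ℝ) < 4 * ρ ^ 2))
    calc (y + 2 * U) ^ 2 * (s * (4 * ρ ^ 2))
        = s * (y + 2 * U) ^ 2 * (4 * ρ ^ 2) := by ring
      _ ≤ _ := hmul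
  set Uu : ℝ := ∑' k, (u k) ^ 2 with hUdef
  clear_value A B
  have hU0 : 0 ≤ Uu := tsum_nonneg fun k => sq_nonneg _
  clear_value Uu
  set M : ℝ := B * Uu / (1 - A) with hMdef
  clear_value M
  have hSbound : ∀ N, ∑ k ∈ Finset.range N, (x k) ^ 2 ≤ M := by
    intro N
    have hself : ∀ N, ∑ k ∈ Finset.range N, (x k) ^ 2
        ≤ A * (∑ k ∈ Finset.range N, (x k) ^ 2) + B * Uu := by
      intro N
      induction N with
      | zero => simp; positivity
      | succ n _ =>
        rw [Finset.sum_range_succ']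
        have h1 : ∑ k ∈ Finset.range n, (x (k + 1)) ^ 2
            ≤ ∑ k ∈ Finset.range n, (A * (x k) ^ 2 + B * (u k) ^ 2) :=
          Finset.sum_le_sum fun k _ => hstep k
        rw [Finset.sum_add_distrib, ← Finset.mul_sum, ← Finset.mul_sum] at h1
        have h2 : ∑ k ∈ Finset.range n, (x k) ^ 2
            ≤ ∑ k ∈ Finset.range (n + 1), (x k) ^ 2 := by
          rw [Finset.sum_range_succ]
          nlinarith [sq_nonneg (x n)]
        have h3 : ∑ k ∈ Finset.range n, (u k) ^ 2 ≤ Uu :=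
          hUdef ▸ Summable.sum_le_tsum _ (fun k _ => sq_nonneg _) hu
        have h4 : A * (∑ k ∈ Finset.range n, (x k) ^ 2)
            ≤ A * (∑ k ∈ Finset.range (n + 1), (x k) ^ 2) :=
          mul_le_mul_of_nonneg_left h2 hA0
        have h5 : B * (∑ k ∈ Finset.range n, (u k) ^ 2) ≤ B * Uu :=
          mul_le_mul_of_nonneg_left h3 hB0
        rw [hx0]
        nlinarith
    have h := hself N
    set SN := ∑ k ∈ Finset.range N, (x k) ^ 2
    rw [hMdef, le_div_iff₀ (by linarith)]
    have hr : SN * (1 - A) = SN - A * SN := by ring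
    rw [hr]; linarith
  have hsummable : Summable (fun k => (x k) ^ 2) :=
    summable_of_sum_range_le (fun k => sq_nonneg _) hSbound
  refine ⟨hsummable, ?_⟩
  have htsum : ∑' k, (x k) ^ 2 ≤ M :=
    Summable.tsum_le_of_sum_range_le hsummable hSbound
  have hM4 : M ≤ 4 / s ^ 2 * Uu := by
    have hkey : B * s ^ 2 ≤ 4 * (1 - A) := by
      rw [hAdef, hBdef, div_mul_eq_mul_div, div_le_iff₀ hρ2]
      have hss : (1 + 1 / s) * s ^ 2 = s + s ^ 2 := by field_simp; ring
      have hrhs : 4 * (1 - (1 + s) / (4 * ρ ^ 2)) * ρ ^ 2 = 4 * ρ ^ 2 - (1 + s) := by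
        field_simp
      rw [hss, hrhs]
      nlinarith [sq_nonneg (s - 1)]
    have hBle : B ≤ 4 / s ^ 2 * (1 - A) := by
      rw [div_mul_eq_mul_div, le_div_iff₀ (by positivity)]
      linarith
    rw [hMdef, div_le_iff₀ (by linarith)]
    calc B * Uu ≤ (4 / s ^ 2 * (1 - A)) * Uu := mul_le_mul_of_nonneg_right hBle hU0
      _ = 4 / s ^ 2 * Uu * (1 - A) := by ring
  have hle : ∑' k, (x k) ^ 2 ≤ 4 / s ^ 2 * Uu := le_trans htsum hM4
  calc Real.sqrt (∑' k, (x k) ^ 2) ≤ Real.sqrt (4 / s ^ 2 * Uu) := Real.sqrt_le_sqrt hle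
    _ = 2 / s * Real.sqrt Uu := by
        rw [show 4 / s ^ 2 * Uu = (2 / s * Real.sqrt Uu) ^ 2 by
          rw [mul_pow, Real.sq_sqrt hU0]; ring_nf]
        exact Real.sqrt_sq (by positivity)
end
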